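/- arXiv:2006.16526 — 4 statements merged into one kernel-verified Lean document; each statement's English description precedes it below -/
import Mathlib

section
/- Consider the linear system arising from the 1D fully-discrete implicit finite volume scheme: for each species m and grid index j, c_j + A_{j+1/2}(c_j/E_j - c_{j+1}/E_{j+1}) + A_{j-1/2}(c_j/E_j - c_{j-1}/E_{j-1}) = b_j with no-flux boundary conditions (boundary fluxes zero), where A_{j±1/2} ≥ 0 and E_j > 0. If b_j ≥ 0 for all j, then any solution satisfies c_j ≥ 0 for all j. -/
/-!
At a grid point `j₀` where `c / E` is minimal, both flux terms are nonpositive: each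
neighbour carries a value of `c / E` at least as large, or lies outside the grid, where
the coefficient vanishes. The equation at `j₀` then gives `c j₀ ≥ b j₀ ≥ 0`, so the
minimum of `c / E` is nonnegative, and so is `c = E · (c / E)` everywhere on the grid.
-/

open Finset

section MinimumPrinciple

variable {a b j₀ : ℤ} {u A : ℤ → ℝ}

lemma flux_nonpos_of_le {α x y : ℝ} (hα : 0 ≤ α) (hxy : x ≤ y) : α * (x - y) ≤ 0 :=
  mul_nonpos_of_nonneg_of_nonpos hα (sub_nonpos.mpr hxy)

lemma right_flux_nonpos_of_forall_le (hA : ∀ j, 0 ≤ A j) (hAb : A b = 0)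
    (hj₀ : j₀ ∈ Icc a b) (hmin : ∀ j ∈ Icc a b, u j₀ ≤ u j) :
    A j₀ * (u j₀ - u (j₀ + 1)) ≤ 0 := by
  rw [mem_Icc] at hj₀
  rcases hj₀.2.eq_or_lt with rfl | hlt
  · simp [hAb]
  · exact flux_nonpos_of_le (hA j₀) (hmin _ (mem_Icc.mpr ⟨by omega, by omega⟩))

lemma left_flux_nonpos_of_forall_le (hA : ∀ j, 0 ≤ A j) (hAa : A (a - 1) = 0)
    (hj₀ : j₀ ∈ Icc a b) (hmin : ∀ j ∈ Icc a b, u j₀ ≤ u j) :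
    A (j₀ - 1) * (u j₀ - u (j₀ - 1)) ≤ 0 := by
  rw [mem_Icc] at hj₀
  rcases hj₀.1.eq_or_lt with rfl | hlt
  · simp [hAa]
  · exact flux_nonpos_of_le (hA _) (hmin _ (mem_Icc.mpr ⟨by omega, by omega⟩))

end MinimumPrinciple

lemma nonneg_of_div_le_div {x y e e' : ℝ} (he' : 0 < e') (hx : 0 ≤ x) (he : 0 < e)
    (hle : x / e ≤ y / e') : 0 ≤ y := by
  have hquot : 0 ≤ y / e' := (div_nonneg hx he.le).trans hle
  simpa using (le_div_iff₀ he').mp hquot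

theorem implicit_scheme_positivity_1d_general (N : ℤ)
    (c E b A : ℤ → ℝ)
    (hE : ∀ j ∈ Finset.Icc (-N) N, 0 < E j)
    (hA : ∀ j, 0 ≤ A j)
    (hbdL : A (-N - 1) = 0) (hbdR : A N = 0)
    (heq : ∀ j ∈ Finset.Icc (-N) N,
      c j + A j * (c j / E j - c (j + 1) / E (j + 1))
          + A (j - 1) * (c j / E j - c (j - 1) / E (j - 1)) = b j)
    (hb : ∀ j ∈ Finset.Icc (-N) N, 0 ≤ b j) :
    ∀ j ∈ Finset.Icc (-N) N, 0 ≤ c j := by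
  intro j hj
  obtain ⟨j₀, hj₀, hmin⟩ := exists_min_image (Icc (-N) N) (fun i => c i / E i) ⟨j, hj⟩
  have hright := right_flux_nonpos_of_forall_le (u := fun i => c i / E i) hA hbdR hj₀ hmin
  have hleft := left_flux_nonpos_of_forall_le (u := fun i => c i / E i) hA hbdL hj₀ hmin
  have hc₀ : 0 ≤ c j₀ := by linarith [heq j₀ hj₀, hb j₀ hj₀]
  exact nonneg_of_div_le_div (hE j hj) hc₀ (hE j₀ hj₀) (hmin j hj)

/-- Positivity preservation for the 1D fully-discrete implicit finite volume
scheme: if `E_j > 0`, the coefficients `A_{j±1/2} ≥ 0` vanish across the domain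
boundary (no-flux), the linear system
`c_j + A_{j+1/2}(c_j/E_j - c_{j+1}/E_{j+1}) + A_{j-1/2}(c_j/E_j - c_{j-1}/E_{j-1}) = b_j`
holds on the grid, and `b_j ≥ 0`, then `c_j ≥ 0` on the grid.
Here `A j` denotes `A_{j+1/2}`. -/
theorem implicit_scheme_positivity_1d (N : ℤ) (hN : 0 ≤ N)
    (c E b A : ℤ → ℝ)
    (hE : ∀ j ∈ Finset.Icc (-N) N, 0 < E j)
    (hA : ∀ j, 0 ≤ A j)
    (hbdL : A (-N - 1) = 0) (hbdR : A N = 0)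
    (heq : ∀ j ∈ Finset.Icc (-N) N,
      c j + A j * (c j / E j - c (j + 1) / E (j + 1))
          + A (j - 1) * (c j / E j - c (j - 1) / E (j - 1)) = b j)
    (hb : ∀ j ∈ Finset.Icc (-N) N, 0 ≤ b j) :
    ∀ j ∈ Finset.Icc (-N) N, 0 ≤ c j :=
  implicit_scheme_positivity_1d_general N c E b A hE hA hbdL hbdR heq hb
end

section
/- Let E_j > 0 and A_{j+1/2} ≥ 0 for j in a finite index set, and suppose (c_j) solves c_j + A_{j+1/2}(c_j/E_j - c_{j+1}/E_{j+1}) + A_{j-1/2}(c_j/E_j - c_{j-1}/E_{j-1}) = b_j with zero boundary fluxes. If the minimum of c_j/E_j over j is attained at j₀ and c_{j₀} < 0, then b_{j₀} < 0. (Contrapositive: b ≥ 0 implies c ≥ 0.) -/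
open Finset

/-
`A j` stands for `A_{j+1/2}`. At a minimiser `j₀` of `c_j / E_j` each flux term
`A (c_{j₀}/E_{j₀} - c_k/E_k)` towards a neighbour `k` is nonpositive: either `k` lies in the
grid, so the difference is `≤ 0`, or `k` is outside and the boundary convention makes the flux
coefficient vanish. Hence
`b_{j₀} ≤ c_{j₀} < 0`.
-/

theorem mul_sub_nonpos_of_forall_le {ι : Type*} {s : Finset ι} {u : ι → ℝ} {i k : ι} {a : ℝ}
    (ha : 0 ≤ a) (hmin : ∀ j ∈ s, u i ≤ u j) (hk : k ∈ s ∨ a = 0) :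
    a * (u i - u k) ≤ 0 := by
  rcases hk with hk | rfl
  · exact mul_nonpos_of_nonneg_of_nonpos ha (sub_nonpos.mpr (hmin k hk))
  · rw [zero_mul]

theorem Int.add_one_mem_Icc_or_eq {a b j : ℤ} (hj : j ∈ Icc a b) :
    j + 1 ∈ Icc a b ∨ j = b := by
  rw [mem_Icc] at hj ⊢
  omega

theorem Int.sub_one_mem_Icc_or_eq {a b j : ℤ} (hj : j ∈ Icc a b) :
    j - 1 ∈ Icc a b ∨ j = a := by
  rw [mem_Icc] at hj ⊢
  omega

theorem minimum_principle_step_general (N : ℤ)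
    (c E b A : ℤ → ℝ)
    (hA : ∀ j, 0 ≤ A j)
    (hbdL : A (-N - 1) = 0) (hbdR : A N = 0)
    (heq : ∀ j ∈ Finset.Icc (-N) N,
      c j + A j * (c j / E j - c (j + 1) / E (j + 1))
          + A (j - 1) * (c j / E j - c (j - 1) / E (j - 1)) = b j)
    (j₀ : ℤ) (hj₀ : j₀ ∈ Finset.Icc (-N) N)
    (hmin : ∀ j ∈ Finset.Icc (-N) N, c j₀ / E j₀ ≤ c j / E j)
    (hneg : c j₀ < 0) :
    b j₀ < 0 := by
  have hright : A j₀ * (c j₀ / E j₀ - c (j₀ + 1) / E (j₀ + 1)) ≤ 0 :=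
    mul_sub_nonpos_of_forall_le (u := fun j => c j / E j) (hA j₀) hmin <|
      (Int.add_one_mem_Icc_or_eq hj₀).imp_right fun h : j₀ = N => h ▸ hbdR
  have hleft : A (j₀ - 1) * (c j₀ / E j₀ - c (j₀ - 1) / E (j₀ - 1)) ≤ 0 :=
    mul_sub_nonpos_of_forall_le (u := fun j => c j / E j) (hA (j₀ - 1)) hmin <|
      (Int.sub_one_mem_Icc_or_eq hj₀).imp_right fun h : j₀ = -N => h ▸ hbdL
  linarith [heq j₀ hj₀]

/-- Minimum-principle step of the positivity proof: if the minimum of `c_j/E_j`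
over the grid is attained at `j₀` and `c_{j₀} < 0`, then the right-hand side
`b_{j₀}` of the linear system is negative. `A j` denotes `A_{j+1/2}`, with
zero boundary fluxes `A_{-N-1/2} = A_{N+1/2} = 0`. -/
theorem minimum_principle_step (N : ℤ) (hN : 0 ≤ N)
    (c E b A : ℤ → ℝ)
    (hE : ∀ j ∈ Finset.Icc (-N) N, 0 < E j)
    (hA : ∀ j, 0 ≤ A j)
    (hbdL : A (-N - 1) = 0) (hbdR : A N = 0)
    (heq : ∀ j ∈ Finset.Icc (-N) N,
      c j + A j * (c j / E j - c (j + 1) / E (j + 1))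
          + A (j - 1) * (c j / E j - c (j - 1) / E (j - 1)) = b j)
    (j₀ : ℤ) (hj₀ : j₀ ∈ Finset.Icc (-N) N)
    (hmin : ∀ j ∈ Finset.Icc (-N) N, c j₀ / E j₀ ≤ c j / E j)
    (hneg : c j₀ < 0) :
    b j₀ < 0 :=
  minimum_principle_step_general N c E b A hA hbdL hbdR heq j₀ hj₀ hmin hneg
end

section
/- Let c_j(t) > 0 and f_j(t) be differentiable functions for j = -N,...,N satisfying the semi-discrete scheme dc_j/dt = -(F_{j+1/2} - F_{j-1/2})/Δx with F_{j+1/2} = -(1/Δx)·exp(-f_{j+1/2})·(c_{j+1}/exp(-f_{j+1}) - c_j/exp(-f_j)), no-flux boundary conditions F_{-N-1/2} = F_{N+1/2} = 0, and suppose f_j = Σ_i c_i T_{j-i} with symmetric tensor T_{j-i} = T_{i-j}. Then the discrete free energy E_Δ(t) = Δx Σ_j c_j log(c_j/exp(-f_j/2)) satisfies dE_Δ/dt = -D_Δ ≤ 0, where D_Δ = (1/Δx)Σ_j exp(-f_{j+1/2})·(1/β_j)·(c_{j+1}/exp(-f_{j+1}) - c_j/exp(-f_j))² with β_j between c_j/exp(-f_j)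 and c_{j+1}/exp(-f_{j+1}). -/
open Finset Real

/-! With `u_j = c_j / e^{-f_j}`, the symmetry of `T` gives `∑ c_j f_j' = ∑ c_j' f_j`, so
`E_Δ' = Δx ∑ c_j' (log u_j + 1)`. Summation by parts against the no-flux boundary turns this
into `∑ F_{j+1/2} (log u_{j+1} - log u_j)`, and `log u_{j+1} - log u_j = (u_{j+1} - u_j) / β_j`
for the logarithmic mean `β_j` of `u_j` and `u_{j+1}`, which lies between them by the mean
value theorem. -/

noncomputable def logMean (a b : ℝ) : ℝ :=
  if a = b then a else (b - a) / (log b - log a)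

lemma logMean_comm (a b : ℝ) : logMean a b = logMean b a := by
  by_cases h : a = b
  · rw [h]
  rw [logMean, logMean, if_neg h, if_neg (Ne.symm h), ← neg_sub b a, ← neg_sub (log b),
    neg_div_neg_eq]

lemma logMean_mem_Ioo {a b : ℝ} (ha : 0 < a) (hab : a < b) : logMean a b ∈ Set.Ioo a b := by
  obtain ⟨ξ, hξ, hslope⟩ := exists_hasDerivAt_eq_slope log (·⁻¹) hab
    (continuousOn_log.mono fun x hx => (ha.trans_le hx.1).ne')
    (fun x hx => hasDerivAt_log (ha.trans hx.1).ne')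
  rwa [logMean, if_neg hab.ne, ← inv_div, ← hslope, inv_inv]

lemma logMean_mem_uIcc {a b : ℝ} (ha : 0 < a) (hb : 0 < b) : logMean a b ∈ Set.uIcc a b := by
  rcases lt_trichotomy a b with hab | rfl | hab
  · exact Set.Icc_subset_uIcc (Set.Ioo_subset_Icc_self (logMean_mem_Ioo ha hab))
  · simp [logMean]
  · rw [logMean_comm, Set.uIcc_comm]
    exact Set.Icc_subset_uIcc (Set.Ioo_subset_Icc_self (logMean_mem_Ioo hb hab))

lemma logMean_pos {a b : ℝ} (ha : 0 < a) (hb : 0 < b) : 0 < logMean a b :=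
  (lt_min ha hb).trans_le (logMean_mem_uIcc ha hb).1

lemma log_sub_log_eq_div_logMean (a b : ℝ) : log b - log a = (b - a) / logMean a b := by
  by_cases h : a = b
  · simp [h]
  rw [logMean, if_neg h, div_div_cancel₀ (sub_ne_zero.2 (Ne.symm h))]

lemma sum_mul_sum_comm_of_symm {ι : Type*} (S : Finset ι) {K : ι → ι → ℝ}
    (hK : ∀ i j, K i j = K j i) (x y : ι → ℝ) :
    ∑ j ∈ S, x j * ∑ i ∈ S, y i * K j i = ∑ j ∈ S, y j * ∑ i ∈ S, x i * K j i := by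
  simp_rw [mul_sum]
  rw [sum_comm]
  refine sum_congr rfl fun j _ => sum_congr rfl fun i _ => ?_
  rw [hK]; ring

-- Valid also at `x = 0`, where `log 0 = 0` breaks `log_div` but both sides vanish.
lemma mul_log_div_exp (x z : ℝ) : x * log (x / exp z) = x * (log x - z) := by
  rcases eq_or_ne x 0 with rfl | hx
  · simp
  rw [log_div hx (exp_ne_zero z), log_exp]

lemma hasDerivAt_mul_log_div_exp {x z : ℝ → ℝ} {x' z' t : ℝ} (hx : HasDerivAt x x' t)
    (hz : HasDerivAt z z' t) (hx0 : x t ≠ 0) :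
    HasDerivAt (fun s => x s * log (x s / exp (z s)))
      (x' * (log (x t / exp (z t)) + 1) - x t * z') t := by
  simp_rw [mul_log_div_exp]
  refine (hx.mul ((hx.log hx0).fun_sub hz)).congr_deriv ?_
  rw [log_div hx0 (exp_ne_zero _), log_exp]
  field_simp
  ring

theorem hasDerivAt_sum_mul_log_div_exp_half {ι : Type*} {S : Finset ι} {c f : ι → ℝ → ℝ}
    {c' : ι → ℝ} {K : ι → ι → ℝ} {t : ℝ} (hK : ∀ i j, K i j = K j i)
    (hf : ∀ j s, f j s = ∑ i ∈ S, c i s * K j i)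
    (hc : ∀ j ∈ S, HasDerivAt (c j) (c' j) t) (hc0 : ∀ j ∈ S, c j t ≠ 0) :
    HasDerivAt (fun s => ∑ j ∈ S, c j s * log (c j s / exp (-f j s / 2)))
      (∑ j ∈ S, c' j * (log (c j t / exp (-f j t)) + 1)) t := by
  have hf' : ∀ j, HasDerivAt (f j) (∑ i ∈ S, c' i * K j i) t := fun j => by
    rw [show f j = fun s => ∑ i ∈ S, c i s * K j i from funext (hf j)]
    exact HasDerivAt.fun_sum fun i hi => (hc i hi).mul_const _
  refine (HasDerivAt.fun_sum fun j hj =>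
      hasDerivAt_mul_log_div_exp (hc j hj) ((hf' j).fun_neg.div_const 2) (hc0 j hj)).congr_deriv
    ?_
  have hsymm := sum_mul_sum_comm_of_symm S hK (fun j => c j t) c'
  simp_rw [← hf] at hsymm
  have hlog : ∀ j ∈ S,
      log (c j t / exp (-f j t)) = log (c j t / exp (-f j t / 2)) + f j t / 2 := fun j hj => by
    simp only [log_div (hc0 j hj) (exp_ne_zero _), log_exp]; ring
  calc _ = ∑ j ∈ S, c' j * (log (c j t / exp (-f j t / 2)) + 1)
        + (∑ j ∈ S, c j t * ∑ i ∈ S, c' i * K j i) / 2 := by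
        rw [sum_div, ← sum_add_distrib]
        exact sum_congr rfl fun j _ => by ring
    _ = _ := by
        rw [hsymm, sum_div, ← sum_add_distrib]
        exact sum_congr rfl fun j hj => by rw [hlog j hj]; ring

lemma sum_Icc_sub_mul_eq_sum_mul_sub (F w : ℤ → ℝ) {a b : ℤ} (hL : F (a - 1) = 0)
    (hR : F b = 0) :
    ∑ j ∈ Icc a b, (F (j - 1) - F j) * w j =
      ∑ j ∈ Icc a (b - 1), F j * (w (j + 1) - w j) := by
  have shift :
      ∑ j ∈ Icc a b, F (j - 1) * w j = ∑ j ∈ Icc (a - 1) (b - 1), F j * w (j + 1) := by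
    rw [show Icc a b = (Icc (a - 1) (b - 1)).map (addRightEmbedding 1) by simp, sum_map]
    simp
  have dropL : ∑ j ∈ Icc (a - 1) (b - 1), F j * w (j + 1) =
      ∑ j ∈ Icc a (b - 1), F j * w (j + 1) := by
    refine (sum_subset (Icc_subset_Icc_left (by omega)) fun j hj hj' => ?_).symm
    obtain rfl : j = a - 1 := by simp only [mem_Icc] at hj hj'; omega
    simp [hL]
  have dropR : ∑ j ∈ Icc a b, F j * w j = ∑ j ∈ Icc a (b - 1), F j * w j := by
    refine (sum_subset (Icc_subset_Icc_right (by omega)) fun j hj hj' => ?_).symm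
    obtain rfl : j = b := by simp only [mem_Icc] at hj hj'; omega
    simp [hR]
  simp only [sub_mul, mul_sub, sum_sub_distrib, shift, dropL, dropR]

theorem semi_discrete_energy_dissipation_general (N : ℤ)
    (Δx : ℝ) (hΔx : 0 < Δx)
    (c f g F : ℤ → ℝ → ℝ) (T : ℤ → ℝ)
    (hT : ∀ n, T n = T (-n))
    (hcpos : ∀ j ∈ Finset.Icc (-N) N, ∀ t : ℝ, 0 < c j t)
    (hgpos : ∀ j, ∀ t : ℝ, 0 < g j t)
    (hf : ∀ j, ∀ t : ℝ, f j t = ∑ i ∈ Finset.Icc (-N) N, c i t * T (j - i))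
    (hF : ∀ j ∈ Finset.Icc (-N) (N - 1), ∀ t : ℝ,
      F j t = -(1 / Δx) * g j t *
        (c (j + 1) t / Real.exp (-f (j + 1) t) - c j t / Real.exp (-f j t)))
    (hbdL : ∀ t : ℝ, F (-N - 1) t = 0) (hbdR : ∀ t : ℝ, F N t = 0)
    (hode : ∀ j ∈ Finset.Icc (-N) N, ∀ t : ℝ,
      HasDerivAt (c j) (-(F j t - F (j - 1) t) / Δx) t) :
    ∀ t : ℝ, ∃ β : ℤ → ℝ,
      (∀ j ∈ Finset.Icc (-N) (N - 1),
        β j ∈ Set.uIcc (c j t / Real.exp (-f j t))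
          (c (j + 1) t / Real.exp (-f (j + 1) t))) ∧
      HasDerivAt
        (fun s => Δx * ∑ j ∈ Finset.Icc (-N) N,
          c j s * Real.log (c j s / Real.exp (-f j s / 2)))
        (-(1 / Δx * ∑ j ∈ Finset.Icc (-N) (N - 1),
          g j t * (1 / β j) *
            (c (j + 1) t / Real.exp (-f (j + 1) t)
              - c j t / Real.exp (-f j t)) ^ 2)) t ∧
      0 ≤ 1 / Δx * ∑ j ∈ Finset.Icc (-N) (N - 1),
          g j t * (1 / β j) *
            (c (j + 1) t / Real.exp (-f (j + 1) t)
              - c j t / Real.exp (-f j t)) ^ 2 := by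
  intro t
  set u : ℤ → ℝ := fun j => c j t / exp (-f j t)
  have hu : ∀ j ∈ Icc (-N) (N - 1), 0 < u j ∧ 0 < u (j + 1) := fun j hj => by
    simp only [mem_Icc] at hj
    exact ⟨div_pos (hcpos j (by simp only [mem_Icc]; omega) t) (exp_pos _),
      div_pos (hcpos (j + 1) (by simp only [mem_Icc]; omega) t) (exp_pos _)⟩
  refine ⟨fun j => logMean (u j) (u (j + 1)),
    fun j hj => logMean_mem_uIcc (hu j hj).1 (hu j hj).2, ?_, ?_⟩
  · have hE := (hasDerivAt_sum_mul_log_div_exp_half (fun i j => by rw [hT, neg_sub]) hf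
      (fun j hj => hode j hj t) fun j hj => (hcpos j hj t).ne').const_mul Δx
    refine hE.congr_deriv ?_
    calc _ = ∑ j ∈ Icc (-N) N, (F (j - 1) t - F j t) * (log (u j) + 1) := by
          rw [mul_sum]
          exact sum_congr rfl fun j _ => by field_simp; ring
      _ = ∑ j ∈ Icc (-N) (N - 1), F j t * ((log (u (j + 1)) + 1) - (log (u j) + 1)) :=
          sum_Icc_sub_mul_eq_sum_mul_sub (F · t) (fun j => log (u j) + 1) (hbdL t) (hbdR t)
      _ = _ := by
          rw [mul_sum, ← sum_neg_distrib]
          refine sum_congr rfl fun j hj => ?_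
          change _ = -(1 / Δx * (g j t * (1 / logMean (u j) (u (j + 1))) * (u (j + 1) - u j) ^ 2))
          rw [show F j t = -(1 / Δx) * g j t * (u (j + 1) - u j) from hF j hj t,
            add_sub_add_right_eq_sub, log_sub_log_eq_div_logMean]
          field_simp
  · refine mul_nonneg (by positivity) (sum_nonneg fun j hj => ?_)
    have := logMean_pos (hu j hj).1 (hu j hj).2
    have := hgpos j t
    positivity

/-- Semi-discrete free energy dissipation (single species): for the 1D
semi-discrete finite volume scheme with positive cell averages `c j t`,
convolution field `f_j = ∑_i c_i T_{j-i}` with symmetric tensor `T`, positive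
interfacial averages `g j t` (playing the role of `exp(-f_{j+1/2})`), fluxes
`F_{j+1/2} = -(1/Δx)·g·(c_{j+1}/e^{-f_{j+1}} - c_j/e^{-f_j})` and no-flux
boundary conditions, the discrete free energy
`E_Δ(t) = Δx ∑_j c_j log(c_j / e^{-f_j/2})` satisfies `dE_Δ/dt = -D_Δ ≤ 0`,
where `D_Δ = (1/Δx) ∑_j g_j (1/β_j)(c_{j+1}/e^{-f_{j+1}} - c_j/e^{-f_j})²`
with `β_j` between `c_j/e^{-f_j}` and `c_{j+1}/e^{-f_{j+1}}`. -/
theorem semi_discrete_energy_dissipation (N : ℤ) (hN : 0 ≤ N)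
    (Δx : ℝ) (hΔx : 0 < Δx)
    (c f g F : ℤ → ℝ → ℝ) (T : ℤ → ℝ)
    (hT : ∀ n, T n = T (-n))
    (hcpos : ∀ j ∈ Finset.Icc (-N) N, ∀ t : ℝ, 0 < c j t)
    (hgpos : ∀ j, ∀ t : ℝ, 0 < g j t)
    (hf : ∀ j, ∀ t : ℝ, f j t = ∑ i ∈ Finset.Icc (-N) N, c i t * T (j - i))
    (hF : ∀ j ∈ Finset.Icc (-N) (N - 1), ∀ t : ℝ,
      F j t = -(1 / Δx) * g j t *
        (c (j + 1) t / Real.exp (-f (j + 1) t) - c j t / Real.exp (-f j t)))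
    (hbdL : ∀ t : ℝ, F (-N - 1) t = 0) (hbdR : ∀ t : ℝ, F N t = 0)
    (hode : ∀ j ∈ Finset.Icc (-N) N, ∀ t : ℝ,
      HasDerivAt (c j) (-(F j t - F (j - 1) t) / Δx) t) :
    ∀ t : ℝ, ∃ β : ℤ → ℝ,
      (∀ j ∈ Finset.Icc (-N) (N - 1),
        β j ∈ Set.uIcc (c j t / Real.exp (-f j t))
          (c (j + 1) t / Real.exp (-f (j + 1) t))) ∧
      HasDerivAt
        (fun s => Δx * ∑ j ∈ Finset.Icc (-N) N,
          c j s * Real.log (c j s / Real.exp (-f j s / 2)))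
        (-(1 / Δx * ∑ j ∈ Finset.Icc (-N) (N - 1),
          g j t * (1 / β j) *
            (c (j + 1) t / Real.exp (-f (j + 1) t)
              - c j t / Real.exp (-f j t)) ^ 2)) t ∧
      0 ≤ 1 / Δx * ∑ j ∈ Finset.Icc (-N) (N - 1),
          g j t * (1 / β j) *
            (c (j + 1) t / Real.exp (-f (j + 1) t)
              - c j t / Real.exp (-f j t)) ^ 2 :=
  semi_discrete_energy_dissipation_general N Δx hΔx c f g F T hT hcpos hgpos hf hF hbdL hbdR hode
end

section
/- The 2D fully-discrete implicit scheme preserves positivity: suppose E_{j,k} > 0, A^x_{j±1/2,k} ≥ 0, A^y_{j,k±1/2} ≥ 0, and (c_{j,k}) solves c_{j,k} + A^x_{j+1/2,k}(c_{j,k}/E_{j,k} - c_{j+1,k}/E_{j+1,k}) + A^x_{j-1/2,k}(c_{j,k}/E_{j,k} - c_{j-1,k}/E_{j-1,k}) + A^y_{j,k+1/2}(c_{j,k}/E_{j,k} - c_{j,k+1}/E_{j,k+1}) + A^y_{j,k-1/2}(c_{j,k}/E_{j,k} - c_{j,k-1}/E_{j,k-1}) = b_{j,k} with zero boundary fluxes.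 If b_{j,k} ≥ 0 for all (j,k), then c_{j,k} ≥ 0 for all (j,k). -/
/-!
At a grid point where `c / E` is minimal, every flux term
`A (c/E - c'/E')` is `≤ 0`: either the neighbour lies in the grid, so `c/E ≤ c'/E'`, or it lies
outside and the coefficient across the boundary vanishes. The equation at that point then gives
`c ≤ b`, so `c ≥ 0` there; hence `min (c / E) ≥ 0` and `c ≥ 0` everywhere since `E > 0`.
-/

open Finset

theorem Finset.nonneg_of_nonneg_at_min_div {ι : Type*} (S : Finset ι) {c E : ι → ℝ}
    (hE : ∀ p ∈ S, 0 < E p)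
    (hmin : ∀ p ∈ S, (∀ q ∈ S, c p / E p ≤ c q / E q) → 0 ≤ c p) :
    ∀ p ∈ S, 0 ≤ c p := by
  intro p hp
  obtain ⟨p₀, hp₀, hp₀min⟩ := S.exists_min_image (fun q => c q / E q) ⟨p, hp⟩
  have hmin_nonneg : 0 ≤ c p₀ / E p₀ := div_nonneg (hmin p₀ hp₀ hp₀min) (hE p₀ hp₀).le
  have hp_nonneg : 0 ≤ c p / E p := hmin_nonneg.trans (hp₀min p hp)
  simpa using (le_div_iff₀ (hE p hp)).1 hp_nonneg

theorem mul_sub_nonpos_of_eq_zero_or_le {a x y : ℝ} (ha : 0 ≤ a) (h : a = 0 ∨ x ≤ y) :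
    a * (x - y) ≤ 0 := by
  rcases h with rfl | h
  · simp
  · exact mul_nonpos_of_nonneg_of_nonpos ha (sub_nonpos.2 h)

section FivePointScheme

variable {Nx Ny : ℤ} {c E b Ax Ay : ℤ → ℤ → ℝ}

theorem five_point_scheme_nonneg_at_min_div {j₀ k₀ : ℤ}
    (hj₀ : j₀ ∈ Icc (-Nx) Nx) (hk₀ : k₀ ∈ Icc (-Ny) Ny)
    (hAx : ∀ j k, 0 ≤ Ax j k) (hAy : ∀ j k, 0 ≤ Ay j k)
    (hbdxL : ∀ k, Ax (-Nx - 1) k = 0) (hbdxR : ∀ k, Ax Nx k = 0)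
    (hbdyL : ∀ j, Ay j (-Ny - 1) = 0) (hbdyR : ∀ j, Ay j Ny = 0)
    (heq : c j₀ k₀
        + Ax j₀ k₀ * (c j₀ k₀ / E j₀ k₀ - c (j₀ + 1) k₀ / E (j₀ + 1) k₀)
        + Ax (j₀ - 1) k₀ * (c j₀ k₀ / E j₀ k₀ - c (j₀ - 1) k₀ / E (j₀ - 1) k₀)
        + Ay j₀ k₀ * (c j₀ k₀ / E j₀ k₀ - c j₀ (k₀ + 1) / E j₀ (k₀ + 1))
        + Ay j₀ (k₀ - 1) * (c j₀ k₀ / E j₀ k₀ - c j₀ (k₀ - 1) / E j₀ (k₀ - 1)) = b j₀ k₀)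
    (hb : 0 ≤ b j₀ k₀)
    (hmin : ∀ j ∈ Icc (-Nx) Nx, ∀ k ∈ Icc (-Ny) Ny, c j₀ k₀ / E j₀ k₀ ≤ c j k / E j k) :
    0 ≤ c j₀ k₀ := by
  rw [mem_Icc] at hj₀ hk₀
  have right : Ax j₀ k₀ = 0 ∨ c j₀ k₀ / E j₀ k₀ ≤ c (j₀ + 1) k₀ / E (j₀ + 1) k₀ := by
    rcases (by omega : j₀ = Nx ∨ j₀ + 1 ≤ Nx) with rfl | h
    · exact .inl (hbdxR k₀)
    · exact .inr (hmin _ (mem_Icc.2 (by omega)) _ (mem_Icc.2 hk₀))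
  have left : Ax (j₀ - 1) k₀ = 0 ∨ c j₀ k₀ / E j₀ k₀ ≤ c (j₀ - 1) k₀ / E (j₀ - 1) k₀ := by
    rcases (by omega : j₀ - 1 = -Nx - 1 ∨ -Nx ≤ j₀ - 1) with h | h
    · exact .inl (h ▸ hbdxL k₀)
    · exact .inr (hmin _ (mem_Icc.2 (by omega)) _ (mem_Icc.2 hk₀))
  have up : Ay j₀ k₀ = 0 ∨ c j₀ k₀ / E j₀ k₀ ≤ c j₀ (k₀ + 1) / E j₀ (k₀ + 1) := by
    rcases (by omega : k₀ = Ny ∨ k₀ + 1 ≤ Ny) with rfl | h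
    · exact .inl (hbdyR j₀)
    · exact .inr (hmin _ (mem_Icc.2 hj₀) _ (mem_Icc.2 (by omega)))
  have down : Ay j₀ (k₀ - 1) = 0 ∨ c j₀ k₀ / E j₀ k₀ ≤ c j₀ (k₀ - 1) / E j₀ (k₀ - 1) := by
    rcases (by omega : k₀ - 1 = -Ny - 1 ∨ -Ny ≤ k₀ - 1) with h | h
    · exact .inl (h ▸ hbdyL j₀)
    · exact .inr (hmin _ (mem_Icc.2 hj₀) _ (mem_Icc.2 (by omega)))
  linarith [mul_sub_nonpos_of_eq_zero_or_le (hAx _ _) right,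
    mul_sub_nonpos_of_eq_zero_or_le (hAx _ _) left,
    mul_sub_nonpos_of_eq_zero_or_le (hAy _ _) up,
    mul_sub_nonpos_of_eq_zero_or_le (hAy _ _) down]

end FivePointScheme

theorem implicit_scheme_positivity_2d_general (Nx Ny : ℤ)
    (c E b Ax Ay : ℤ → ℤ → ℝ)
    (hE : ∀ j ∈ Finset.Icc (-Nx) Nx, ∀ k ∈ Finset.Icc (-Ny) Ny, 0 < E j k)
    (hAx : ∀ j k, 0 ≤ Ax j k) (hAy : ∀ j k, 0 ≤ Ay j k)
    (hbdxL : ∀ k, Ax (-Nx - 1) k = 0) (hbdxR : ∀ k, Ax Nx k = 0)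
    (hbdyL : ∀ j, Ay j (-Ny - 1) = 0) (hbdyR : ∀ j, Ay j Ny = 0)
    (heq : ∀ j ∈ Finset.Icc (-Nx) Nx, ∀ k ∈ Finset.Icc (-Ny) Ny,
      c j k
        + Ax j k * (c j k / E j k - c (j + 1) k / E (j + 1) k)
        + Ax (j - 1) k * (c j k / E j k - c (j - 1) k / E (j - 1) k)
        + Ay j k * (c j k / E j k - c j (k + 1) / E j (k + 1))
        + Ay j (k - 1) * (c j k / E j k - c j (k - 1) / E j (k - 1)) = b j k)
    (hb : ∀ j ∈ Finset.Icc (-Nx) Nx, ∀ k ∈ Finset.Icc (-Ny) Ny, 0 ≤ b j k) :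
    ∀ j ∈ Finset.Icc (-Nx) Nx, ∀ k ∈ Finset.Icc (-Ny) Ny, 0 ≤ c j k := by
  intro j hj k hk
  refine (Icc (-Nx) Nx ×ˢ Icc (-Ny) Ny).nonneg_of_nonneg_at_min_div
    (c := fun p => c p.1 p.2) (E := fun p => E p.1 p.2) ?_ ?_ (j, k) (mem_product.2 ⟨hj, hk⟩)
  · rintro ⟨j, k⟩ hp
    rw [mem_product] at hp
    exact hE j hp.1 k hp.2
  · rintro ⟨j₀, k₀⟩ hp₀ hmin
    rw [mem_product] at hp₀
    exact five_point_scheme_nonneg_at_min_div hp₀.1 hp₀.2 hAx hAy hbdxL hbdxR hbdyL hbdyR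
      (heq j₀ hp₀.1 k₀ hp₀.2) (hb j₀ hp₀.1 k₀ hp₀.2)
      (fun j hj k hk => hmin (j, k) (mem_product.2 ⟨hj, hk⟩))

/-- Positivity preservation for the 2D fully-discrete implicit scheme: with
`E_{j,k} > 0`, nonnegative coefficients `A^x`, `A^y` vanishing across the
domain boundary (no-flux), and the five-point linear system with right-hand
side `b_{j,k} ≥ 0`, any solution satisfies `c_{j,k} ≥ 0` on the grid. Here
`Ax j k` denotes `A^x_{j+1/2,k}` and `Ay j k` denotes `A^y_{j,k+1/2}`. -/
theorem implicit_scheme_positivity_2d (Nx Ny : ℤ) (hNx : 0 ≤ Nx) (hNy : 0 ≤ Ny)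
    (c E b Ax Ay : ℤ → ℤ → ℝ)
    (hE : ∀ j ∈ Finset.Icc (-Nx) Nx, ∀ k ∈ Finset.Icc (-Ny) Ny, 0 < E j k)
    (hAx : ∀ j k, 0 ≤ Ax j k) (hAy : ∀ j k, 0 ≤ Ay j k)
    (hbdxL : ∀ k, Ax (-Nx - 1) k = 0) (hbdxR : ∀ k, Ax Nx k = 0)
    (hbdyL : ∀ j, Ay j (-Ny - 1) = 0) (hbdyR : ∀ j, Ay j Ny = 0)
    (heq : ∀ j ∈ Finset.Icc (-Nx) Nx, ∀ k ∈ Finset.Icc (-Ny) Ny,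
      c j k
        + Ax j k * (c j k / E j k - c (j + 1) k / E (j + 1) k)
        + Ax (j - 1) k * (c j k / E j k - c (j - 1) k / E (j - 1) k)
        + Ay j k * (c j k / E j k - c j (k + 1) / E j (k + 1))
        + Ay j (k - 1) * (c j k / E j k - c j (k - 1) / E j (k - 1)) = b j k)
    (hb : ∀ j ∈ Finset.Icc (-Nx) Nx, ∀ k ∈ Finset.Icc (-Ny) Ny, 0 ≤ b j k) :
    ∀ j ∈ Finset.Icc (-Nx) Nx, ∀ k ∈ Finset.Icc (-Ny) Ny, 0 ≤ c j k :=
  implicit_scheme_positivity_2d_general Nx Ny c E b Ax Ay hE hAx hAy hbdxL hbdxR hbdyL hbdyR heq hb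
end
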